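/- For every natural number k ≥ 0 and every n, the map o_n restricted to S_n ∩ W_{n+k}^N is an order isomorphism from (S_n ∩ W_{n+k}^N, ≺) onto (ω_{k+1}, <), where ω_1 = ω, ω_{j+1} = ω^{ω_j} computed inside ordinal arithmetic (explicitly, ω_{k+1} is the tower of (k+1) ω-exponentiations applied to 1). -/

import Mathlib

open scoped Classical

/-- Words: finite strings over the alphabet of natural numbers. -/
abbrev Word := List ℕ

/-- Lexicographic "not greater" comparison of finite sequences of words,
where entries are compared with the preorder `r`. -/
def LexLe (r : Word → Word → Prop) (xs ys : List Word) : Prop :=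
  (xs.length ≤ ys.length ∧ ∀ i < xs.length,
      r (xs.getD i []) (ys.getD i []) ∧ r (ys.getD i []) (xs.getD i []))
  ∨ ∃ s, s < xs.length ∧ s < ys.length ∧
      (∀ i < s, r (xs.getD i []) (ys.getD i []) ∧ r (ys.getD i []) (xs.getD i [])) ∧
      r (xs.getD s []) (ys.getD s []) ∧ ¬ r (ys.getD s []) (xs.getD s [])

/-- `M` is a lexicographically maximal subsequence of `xs` (w.r.t. entry preorder `r`). -/
def IsLexMax (r : Word → Word → Prop) (xs M : List Word) : Prop :=
  M.Sublist xs ∧ ∀ N : List Word, N.Sublist xs → LexLe r N M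

/-- Fuelled version of the recursively defined preorder `≾` on words:
`Λ ≾ Λ`; and if `n` is the minimal symbol of `A ++ B`, split `A` and `B` into
blocks at `n` and compare the lexicographically maximal subsequences of blocks. -/
def leAux : ℕ → Word → Word → Prop
  | 0, A, B => A = [] ∧ B = []
  | (fuel+1), A, B =>
      (A = [] ∧ B = []) ∨
      (∀ m, (A ++ B).min? = some m →
        ∀ MA MB : List Word, IsLexMax (leAux fuel) (A.splitOn m) MA →
          IsLexMax (leAux fuel) (B.splitOn m) MB →
          LexLe (leAux fuel) MA MB)

/-- The preorder `≾` on words (the fuel `|A|+|B|+1` suffices for the recursion). -/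
def Wle (A B : Word) : Prop := leAux (A.length + B.length + 1) A B

/-- The equivalence `∼`: `A ≾ B` and `B ≾ A`. -/
def Wequiv (A B : Word) : Prop := Wle A B ∧ Wle B A

/-- The strict relation `≺`: `A ≾ B` and not `B ≾ A`. -/
def Wlt (A B : Word) : Prop := Wle A B ∧ ¬ Wle B A

/-- Fuelled version of the normal form predicate `NF`. -/
def NFAux : ℕ → Word → Prop
  | 0, A => A = []
  | (fuel+1), A => A = [] ∨ ∀ m, A.min? = some m →
      (A.splitOn m).Chain' (fun x y => Wle y x) ∧ ∀ b ∈ A.splitOn m, NFAux fuel b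

/-- `A` is in normal form. -/
def InNF (A : Word) : Prop := NFAux A.length A

/-- `◇ₖ A`: the normal form of the word `A` with symbol `k` appended. -/
noncomputable def diamond (k : ℕ) (A : Word) : Word :=
  if h : ∃ B, InNF B ∧ Wequiv B (A ++ [k]) then h.choose else []

/-- Fuelled version of the ordinal value functions `o_n` on normal-form words in `S_n`. -/
noncomputable def oAux : ℕ → ℕ → Word → Ordinal
  | 0, _, _ => 0
  | (fuel+1), n, A =>
      if A.all (· = n) then (A.length : Ordinal)
      else ((A.splitOn n).map (fun b => Ordinal.omega0 ^ oAux fuel (n+1) b)).foldr (· + ·) 0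

/-- The ordinal value function `o_n : NF ∩ S_n → Ordinals`. -/
noncomputable def oW (n : ℕ) (A : Word) : Ordinal :=
  oAux (A.foldr max 0 + A.length + 1) n A

/-- The towers of `ω`-exponentiations: `ω_0 = 1`, `ω_{n+1} = ω ^ ω_n`. -/
noncomputable def omegaTower : ℕ → Ordinal
  | 0 => 1
  | (n+1) => Ordinal.omega0 ^ omegaTower n

/-- `ε₀`, the supremum of the `ω`-towers. -/
noncomputable def eps0 : Ordinal := ⨆ n : ℕ, omegaTower n

/-- The function `ψ` on ordinals: `ψ 0 = ω`, and for `α > 0` with Cantor normal form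
`ω^{α_1}+⋯+ω^{α_n}` (non-increasing exponents), `ψ α = ω^{α_1}+⋯+ω^{α_{n-1}}+ω^{α_n+1}`. -/
noncomputable def psi (α : Ordinal) : Ordinal :=
  match (Ordinal.CNF Ordinal.omega0 α).getLast? with
  | none => Ordinal.omega0
  | some p =>
      ((Ordinal.CNF Ordinal.omega0 α).dropLast).foldr
        (fun q r => Ordinal.omega0 ^ q.1 * q.2 + r) 0
      + (Ordinal.omega0 ^ p.1 * (p.2 - 1) + Ordinal.omega0 ^ (p.1 + 1))

/-- The standard fundamental sequences `α[n]` for limit ordinals below `ε₀`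
(junk values elsewhere). -/
noncomputable def fundSeq (α : Ordinal) (n : ℕ) : Ordinal :=
  match (Ordinal.CNF Ordinal.omega0 α).getLast? with
  | none => 0
  | some p =>
    let pre := ((Ordinal.CNF Ordinal.omega0 α).dropLast).foldr
        (fun q r => Ordinal.omega0 ^ q.1 * q.2 + r) 0
      + Ordinal.omega0 ^ p.1 * (p.2 - 1)
    if p.1 = 0 then 0
    else if h : ∃ e', p.1 = e' + 1 then
      pre + Ordinal.omega0 ^ h.choose * ((n : Ordinal) + 1)
    else if hlt : p.1 < α then pre + Ordinal.omega0 ^ (fundSeq p.1 n) else 0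
termination_by α
decreasing_by exact hlt

/-- The relation `R`: `α R β` iff `β = α + 1`, or `β` is a limit and `α = β[n]` for some `n`. -/
def Rrel (α β : Ordinal) : Prop :=
  β = α + 1 ∨ (Order.IsSuccLimit β ∧ ∃ n : ℕ, α = fundSeq β n)
/-- `S_n ∩ W_{n+k}^N`: normal-form words with all symbols in `[n, n+k]`. -/
def SnWkN (n k : ℕ) : Set Word :=
  {A | (∀ c ∈ A, n ≤ c) ∧ (∀ c ∈ A, c ≤ n + k) ∧ InNF A}

/-!
Splitting a word `A ∈ S_n` at the occurrences of `n` gives blocks `A_1, …, A_r ∈ S_{n+1}`, and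
`1 + o_n(A) = ω^{o_{n+1}(A_1)} + ⋯ + ω^{o_{n+1}(A_r)}`, while `A` is in normal form iff its blocks
are and `A_r ≾ ⋯ ≾ A_1`. Induct on the number of symbols allowed. If `≾` matches the order of
values on the blocks, the blocks of a normal-form word have nonincreasing values, so they are their
own lexicographically maximal subsequence, and comparing two such block lists lexicographically is
comparing the Cantor normal forms of their values. Uniqueness and existence of Cantor normal forms
give injectivity and surjectivity onto `ω_{k+1}` in the same way.
-/

open Ordinal

noncomputable def opowSum (u : List Ordinal) : Ordinal := (u.map (ω ^ ·)).sum

@[simp] lemma opowSum_nil : opowSum [] = 0 := rfl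

@[simp] lemma opowSum_cons (a : Ordinal) (u : List Ordinal) :
    opowSum (a :: u) = ω ^ a + opowSum u := by
  simp [opowSum]

lemma opow_le_opowSum {a : Ordinal} {u : List Ordinal} (h : a ∈ u) : ω ^ a ≤ opowSum u := by
  induction u with
  | nil => simp at h
  | cons b u ih =>
    rcases List.mem_cons.1 h with rfl | h
    · simp
    · simpa using (ih h).trans le_add_self

lemma opowSum_pos {u : List Ordinal} (h : u ≠ []) : 0 < opowSum u := by
  obtain ⟨a, u, rfl⟩ := List.exists_cons_of_ne_nil h
  exact (opow_pos a omega0_pos).trans_le (opow_le_opowSum List.mem_cons_self)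

lemma List.Sublist.opowSum_le {u v : List Ordinal} (h : u.Sublist v) : opowSum u ≤ opowSum v := by
  induction h with
  | slnil => rfl
  | cons b _ ih => simpa using ih.trans le_add_self
  | cons_cons b _ ih => simpa using (add_le_add_iff_left (ω ^ b)).2 ih

lemma opowSum_lt_opow {u : List Ordinal} {b : Ordinal} (h : ∀ a ∈ u, a < b) :
    opowSum u < ω ^ b := by
  induction u with
  | nil => simpa using opow_pos b omega0_pos
  | cons a u ih =>
    simp only [List.mem_cons, forall_eq_or_imp] at h
    exact isPrincipal_add_omega0_opow b ((opow_lt_opow_iff_right one_lt_omega0).2 h.1) (ih h.2)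

lemma opowSum_cons_lt_cons_of_lt {a b : Ordinal} {u : List Ordinal} (v : List Ordinal)
    (hu : (a :: u).Pairwise (· ≥ ·)) (h : a < b) : opowSum (a :: u) < opowSum (b :: v) := by
  refine (opowSum_lt_opow fun x hx => ?_).trans_le (opow_le_opowSum List.mem_cons_self)
  rcases List.mem_cons.1 hx with rfl | hx
  exacts [h, ((List.pairwise_cons.1 hu).1 x hx).trans_lt h]

lemma opowSum_cons_le_cons_iff {a b : Ordinal} {u v : List Ordinal}
    (hu : (a :: u).Pairwise (· ≥ ·)) (hv : (b :: v).Pairwise (· ≥ ·)) :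
    opowSum (a :: u) ≤ opowSum (b :: v) ↔ a < b ∨ a = b ∧ opowSum u ≤ opowSum v := by
  rcases lt_trichotomy a b with hab | rfl | hab
  · simpa [hab] using (opowSum_cons_lt_cons_of_lt v hu hab).le
  · simp
  · simpa [hab.not_gt, hab.ne'] using opowSum_cons_lt_cons_of_lt u hv hab

lemma eq_of_opowSum_eq {u v : List Ordinal} (hu : u.Pairwise (· ≥ ·)) (hv : v.Pairwise (· ≥ ·))
    (h : opowSum u = opowSum v) : u = v := by
  induction u generalizing v with
  | nil => cases v with
    | nil => rfl
    | cons b v => exact absurd h (opowSum_pos (List.cons_ne_nil b v)).ne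
  | cons a u ih => cases v with
    | nil => exact absurd h (opowSum_pos (List.cons_ne_nil a u)).ne'
    | cons b v =>
      rcases lt_trichotomy a b with hab | rfl | hab
      · exact absurd h (opowSum_cons_lt_cons_of_lt v hu hab).ne
      · rw [ih hu.of_cons hv.of_cons (by simpa using h)]
      · exact absurd h (opowSum_cons_lt_cons_of_lt u hv hab).ne'

lemma exists_opowSum_eq {γ α : Ordinal} (h : γ < ω ^ α) :
    ∃ u : List Ordinal, u.Pairwise (· ≥ ·) ∧ (∀ a ∈ u, a < α) ∧ opowSum u = γ := by
  induction γ using WellFoundedLT.induction generalizing α with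
  | _ γ ih =>
  rcases eq_or_ne γ 0 with rfl | hγ
  · exact ⟨[], .nil, by simp, rfl⟩
  set e := log ω γ
  have he : e < α := (lt_opow_iff_log_lt one_lt_omega0 hγ).1 h
  have hγe : γ < ω ^ (e + 1) := by
    simpa [Order.succ_eq_add_one] using lt_opow_succ_log_self one_lt_omega0 γ
  obtain ⟨δ, hδ⟩ : ∃ δ, γ = ω ^ e + δ :=
    ⟨γ - ω ^ e, (Ordinal.add_sub_cancel_of_le (opow_log_le_self _ hγ)).symm⟩
  -- `δ = γ` would make `ω ^ e` absorbed by `γ`, forcing `ω ^ (e + 1) ≤ γ`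
  have hδγ : δ < γ := by
    refine (hδ ▸ le_add_self).lt_of_ne fun hδγ => hγe.not_ge ?_
    have habsorb : ω ^ e + δ = δ := by rw [← hδ, hδγ]
    rw [opow_add, opow_one, ← hδγ]
    exact add_eq_right_iff_mul_omega0_le.1 habsorb
  obtain ⟨u, hu, hue, rfl⟩ := ih δ hδγ (hδγ.le.trans_lt hγe)
  have hue' : ∀ x ∈ u, x ≤ e := fun x hx => Order.lt_add_one_iff.1 (hue x hx)
  refine ⟨e :: u, List.pairwise_cons.2 ⟨hue', hu⟩, fun x hx => ?_, by rw [opowSum_cons, hδ]⟩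
  rcases List.mem_cons.1 hx with rfl | hx
  exacts [he, (hue' x hx).trans_lt he]

namespace List

variable {α : Type*}

section SplitOn

variable [BEq α] [LawfulBEq α]

theorem flatten_splitOn (a : α) (l : List α) : (l.splitOn a).flatten = l.filter (· != a) := by
  induction l with
  | nil => simp
  | cons x l ih =>
    rw [splitOn_cons_eq_if_modifyHead]
    by_cases hx : x = a
    · simp [hx, ih]
    · obtain ⟨b, L, hbL⟩ := exists_cons_of_ne_nil (splitOn_ne_nil a l)
      rw [hbL] at ih
      simp_all

theorem mem_of_mem_splitOn {a c : α} {l b : List α} (hb : b ∈ l.splitOn a) (hc : c ∈ b) :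
    c ∈ l ∧ c ≠ a := by
  have : c ∈ (l.splitOn a).flatten := mem_flatten.2 ⟨b, hb, hc⟩
  simpa [flatten_splitOn] using this

theorem exists_mem_splitOn_of_mem {a c : α} {l : List α} (hc : c ∈ l) (hca : c ≠ a) :
    ∃ b ∈ l.splitOn a, c ∈ b :=
  mem_flatten.1 (by simpa [flatten_splitOn] using ⟨hc, hca⟩)

theorem length_lt_of_mem_splitOn {a : α} {l b : List α} (ha : a ∈ l) (hb : b ∈ l.splitOn a) :
    b.length < l.length :=
  calc b.length ≤ (l.splitOn a).flatten.length := (sublist_flatten_of_mem hb).length_le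
    _ < l.length := by
      rw [flatten_splitOn, length_filter_lt_length_iff_exists]
      exact ⟨a, ha, by simp⟩

theorem splitOn_replicate (k : ℕ) (a : α) : (replicate k a).splitOn a = replicate (k + 1) [] := by
  induction k with
  | zero => simp
  | succ k ih => rw [replicate_succ, splitOn_cons_eq_if_modifyHead, ih]; simp [replicate_succ]

end SplitOn

theorem getD_mem_of_forall_mem {D : Set α} {d : α} (hd : d ∈ D) {l : List α}
    (hl : ∀ x ∈ l, x ∈ D) (i : ℕ) : l.getD i d ∈ D := by
  rw [getD_eq_getElem?_getD]
  cases h : l[i]? with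
  | none => exact hd
  | some x => exact hl x (mem_of_getElem? h)

theorem card_toFinset_lt_of_forall_mem [DecidableEq α] {a : α} {s t : List α}
    (ha : a ∈ t) (hs : ∀ c ∈ s, c ∈ t ∧ c ≠ a) : s.toFinset.card < t.toFinset.card :=
  Finset.card_lt_card ⟨fun c hc => mem_toFinset.2 (hs c (mem_toFinset.1 hc)).1,
    fun h => (hs a (mem_toFinset.1 (h (mem_toFinset.2 ha)))).2 rfl⟩

theorem IsChain.pairwise_map_ge {β : Type*} [Preorder β] {r : α → α → Prop} {f : α → β}
    {l : List α} (hl : l.IsChain fun x y => r y x) (hr : ∀ x ∈ l, ∀ y ∈ l, r x y → f x ≤ f y) :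
    (l.map f).Pairwise (· ≥ ·) :=
  isChain_iff_pairwise.1 <| (isChain_map f).2 <|
    hl.imp_of_mem_imp fun x y hx hy => hr y hy x hx

end List

lemma Set.InjOn.eq_of_list_map_eq {α β : Type*} {f : α → β} {s : Set α} (hf : Set.InjOn f s) :
    ∀ {l₁ l₂ : List α}, (∀ x ∈ l₁, x ∈ s) → (∀ x ∈ l₂, x ∈ s) → l₁.map f = l₂.map f → l₁ = l₂
  | [], [], _, _, _ => rfl
  | a :: l₁, b :: l₂, h₁, h₂, h => by
    simp only [List.map_cons, List.cons.injEq] at h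
    simp only [List.mem_cons, forall_eq_or_imp] at h₁ h₂
    rw [hf h₁.1 h₂.1 h.1, hf.eq_of_list_map_eq h₁.2 h₂.2 h.2]
  | [], _ :: _, _, _, h | _ :: _, [], _, _, h => by simp at h

section LexLe

variable {r r' : Word → Word → Prop}

lemma lexLe_nil_left (ys : List Word) : LexLe r [] ys :=
  Or.inl ⟨Nat.zero_le _, by simp⟩

lemma not_lexLe_cons_nil (x : Word) (xs : List Word) : ¬ LexLe r (x :: xs) [] := by
  simp [LexLe]

lemma lexLe_cons_cons {x y : Word} {xs ys : List Word} :
    LexLe r (x :: xs) (y :: ys) ↔ r x y ∧ ¬ r y x ∨ r x y ∧ r y x ∧ LexLe r xs ys := by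
  simp only [LexLe, List.length_cons, Nat.add_le_add_iff_right, Nat.forall_lt_succ_left,
    Nat.exists_lt_succ_left, List.getD_cons_zero, List.getD_cons_succ, Nat.add_lt_add_iff_right,
    Nat.zero_lt_succ, Nat.not_lt_zero, false_imp_iff, implies_true, true_and]
  tauto

lemma lexLe_comap_iff (f : Word → Ordinal) {xs ys : List Word}
    (hxs : (xs.map f).Pairwise (· ≥ ·)) (hys : (ys.map f).Pairwise (· ≥ ·)) :
    LexLe (fun x y => f x ≤ f y) xs ys ↔ opowSum (xs.map f) ≤ opowSum (ys.map f) := by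
  induction xs generalizing ys with
  | nil => exact iff_of_true (lexLe_nil_left ys) (by simp)
  | cons x xs ih => cases ys with
    | nil => exact iff_of_false (not_lexLe_cons_nil x xs) (not_le.2 (opowSum_pos (by simp)))
    | cons y ys =>
      rw [lexLe_cons_cons, List.map_cons, List.map_cons, opowSum_cons_le_cons_iff hxs hys,
        ← ih hxs.of_cons hys.of_cons, lt_iff_le_not_ge, le_antisymm_iff, and_assoc]

-- `leAux (f + 1) A B` unfolds to `LexMaxLe (leAux f)` on the blocks of `A` and `B`.
def LexMaxLe (r : Word → Word → Prop) (xs ys : List Word) : Prop :=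
  ∀ M N, IsLexMax r xs M → IsLexMax r ys N → LexLe r M N

lemma isLexMax_comap_self (f : Word → Ordinal) {xs : List Word}
    (hxs : (xs.map f).Pairwise (· ≥ ·)) : IsLexMax (fun x y => f x ≤ f y) xs xs :=
  ⟨.refl xs, fun _ hN =>
    (lexLe_comap_iff f (hxs.sublist (hN.map f)) hxs).2 (hN.map f).opowSum_le⟩

lemma IsLexMax.opowSum_comap_eq {f : Word → Ordinal} {xs M : List Word}
    (hM : IsLexMax (fun x y => f x ≤ f y) xs M) (hxs : (xs.map f).Pairwise (· ≥ ·)) :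
    opowSum (M.map f) = opowSum (xs.map f) :=
  (hM.1.map f).opowSum_le.antisymm <|
    (lexLe_comap_iff f hxs (hxs.sublist (hM.1.map f))).1 (hM.2 xs (.refl xs))

lemma lexMaxLe_comap_iff (f : Word → Ordinal) {xs ys : List Word}
    (hxs : (xs.map f).Pairwise (· ≥ ·)) (hys : (ys.map f).Pairwise (· ≥ ·)) :
    LexMaxLe (fun x y => f x ≤ f y) xs ys ↔ opowSum (xs.map f) ≤ opowSum (ys.map f) := by
  refine ⟨fun h => (lexLe_comap_iff f hxs hys).1
    (h xs ys (isLexMax_comap_self f hxs) (isLexMax_comap_self f hys)), fun h M N hM hN => ?_⟩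
  rw [lexLe_comap_iff f (hxs.sublist (hM.1.map f)) (hys.sublist (hN.1.map f)),
    hM.opowSum_comap_eq hxs, hN.opowSum_comap_eq hys]
  exact h

lemma lexLe_congr {D : Set Word} (h : ∀ x ∈ D, ∀ y ∈ D, r x y ↔ r' x y) (hnil : [] ∈ D)
    {xs ys : List Word} (hxs : ∀ x ∈ xs, x ∈ D) (hys : ∀ y ∈ ys, y ∈ D) :
    LexLe r xs ys ↔ LexLe r' xs ys := by
  have hxy (i j : ℕ) :=
    h _ (List.getD_mem_of_forall_mem hnil hxs i) _ (List.getD_mem_of_forall_mem hnil hys j)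
  have hyx (i j : ℕ) :=
    h _ (List.getD_mem_of_forall_mem hnil hys i) _ (List.getD_mem_of_forall_mem hnil hxs j)
  simp only [LexLe, hxy, hyx]

lemma isLexMax_congr {D : Set Word} (h : ∀ x ∈ D, ∀ y ∈ D, r x y ↔ r' x y) (hnil : [] ∈ D)
    {xs M : List Word} (hxs : ∀ x ∈ xs, x ∈ D) : IsLexMax r xs M ↔ IsLexMax r' xs M :=
  and_congr_right fun hM => forall₂_congr fun _ hN =>
    lexLe_congr h hnil (fun x hx => hxs x (hN.subset hx)) (fun x hx => hxs x (hM.subset hx))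

lemma lexMaxLe_congr {D : Set Word} (h : ∀ x ∈ D, ∀ y ∈ D, r x y ↔ r' x y) (hnil : [] ∈ D)
    {xs ys : List Word} (hxs : ∀ x ∈ xs, x ∈ D) (hys : ∀ y ∈ ys, y ∈ D) :
    LexMaxLe r xs ys ↔ LexMaxLe r' xs ys := by
  simp only [LexMaxLe, isLexMax_congr h hnil hxs, isLexMax_congr h hnil hys]
  exact forall₂_congr fun _ _ => forall₂_congr fun hM hN =>
    lexLe_congr h hnil (fun x hx => hxs x (hM.1.subset hx)) (fun y hy => hys y (hN.1.subset hy))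

lemma lexMaxLe_splitOn_congr {A B : Word} {m : ℕ}
    (h : ∀ x y : Word, (∀ c ∈ x ++ y, c ∈ A ++ B ∧ c ≠ m) → (r x y ↔ r' x y)) :
    LexMaxLe r (A.splitOn m) (B.splitOn m) ↔ LexMaxLe r' (A.splitOn m) (B.splitOn m) :=
  lexMaxLe_congr (D := {x | ∀ c ∈ x, c ∈ A ++ B ∧ c ≠ m})
    (fun x hx y hy => h x y fun c hc => (List.mem_append.1 hc).elim (hx c) (hy c)) (by simp)
    (fun _ hb c hc => (List.mem_of_mem_splitOn hb hc).imp_left (List.mem_append_left B))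
    (fun _ hb c hc => (List.mem_of_mem_splitOn hb hc).imp_left (List.mem_append_right A))

end LexLe

-- The fuel is measured by the number of distinct symbols: the recursion also compares a block of
-- `A` with itself, so lengths need not decrease, but every block avoids the minimal symbol `m`.
lemma leAux_congr_fuel {f g : ℕ} {A B : Word} (hf : (A ++ B).toFinset.card < f)
    (hg : (A ++ B).toFinset.card < g) : leAux f A B ↔ leAux g A B := by
  induction f generalizing g A B with
  | zero => omega
  | succ f ih =>
    obtain _ | g := g
    · omega
    refine or_congr_right (forall₂_congr fun m hm => ?_)
    exact lexMaxLe_splitOn_congr fun x y hxy => by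
      have := List.card_toFinset_lt_of_forall_mem (List.min?_mem hm) hxy
      exact ih (by omega) (by omega)

lemma wle_iff_leAux {f : ℕ} {A B : Word} (hf : (A ++ B).toFinset.card < f) :
    Wle A B ↔ leAux f A B :=
  leAux_congr_fuel (by simpa using (List.toFinset_card_le (A ++ B)).trans_lt (Nat.lt_succ_self _))
    hf

lemma wle_iff_lexMaxLe {A B : Word} {m : ℕ} (hm : (A ++ B).min? = some m) :
    Wle A B ↔ LexMaxLe Wle (A.splitOn m) (B.splitOn m) := by
  have hmem := List.min?_mem hm
  rw [wle_iff_leAux (Nat.lt_succ_self _), leAux,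
    or_iff_right fun h => by simp [h.1, h.2] at hmem]
  simp only [hm, Option.some_inj, forall_eq']
  exact lexMaxLe_splitOn_congr fun x y hxy =>
    (wle_iff_leAux (List.card_toFinset_lt_of_forall_mem hmem hxy)).symm

lemma nfAux_nil (f : ℕ) : NFAux f [] := by
  cases f <;> simp [NFAux]

lemma nfAux_congr_fuel {f g : ℕ} {A : Word} (hf : A.length ≤ f) (hg : A.length ≤ g) :
    NFAux f A ↔ NFAux g A := by
  induction f generalizing g A with
  | zero => rw [List.length_eq_zero_iff.1 (Nat.le_zero.1 hf)]; simp only [nfAux_nil]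
  | succ f ih =>
    rcases eq_or_ne A [] with rfl | hA
    · simp only [nfAux_nil]
    obtain _ | g := g
    · exact absurd (List.length_eq_zero_iff.1 (Nat.le_zero.1 hg)) hA
    refine or_congr_right (forall₂_congr fun m hm =>
      and_congr_right fun _ => forall₂_congr fun b hb => ?_)
    have := List.length_lt_of_mem_splitOn (List.min?_mem hm) hb
    exact ih (by omega) (by omega)

lemma inNF_iff_splitOn {n : ℕ} {A : Word} (hS : ∀ c ∈ A, n ≤ c) :
    InNF A ↔ (A.splitOn n).IsChain (fun x y => Wle y x) ∧ ∀ b ∈ A.splitOn n, InNF b := by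
  by_cases hn : n ∈ A
  · obtain ⟨a, A', rfl⟩ := List.exists_cons_of_ne_nil (List.ne_nil_of_mem hn)
    have hmin : (a :: A').min? = some n := List.min?_eq_some_iff.2 ⟨hn, hS⟩
    rw [InNF, List.length_cons, NFAux, or_iff_right (List.cons_ne_nil a A')]
    simp only [hmin, Option.some_inj, forall_eq']
    refine and_congr_right fun _ => forall₂_congr fun b hb => ?_
    have := List.length_lt_of_mem_splitOn hn hb
    exact nfAux_congr_fuel (by simp only [List.length_cons] at this; omega) le_rfl
  · simp [List.splitOn_eq_singleton hn]

lemma oAux_nil (f n : ℕ) : oAux f n [] = 0 := by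
  cases f <;> simp [oAux]

lemma oAux_congr_fuel {f g n : ℕ} {A : Word} (hS : ∀ c ∈ A, n ≤ c) (hf : ∀ c ∈ A, c < f + n)
    (hg : ∀ c ∈ A, c < g + n) : oAux f n A = oAux g n A := by
  induction f generalizing g n A with
  | zero =>
    obtain rfl : A = [] := List.eq_nil_iff_forall_not_mem.2 fun c hc => by
      have := hS c hc; have := hf c hc; omega
    simp only [oAux_nil]
  | succ f ih =>
    rcases eq_or_ne A [] with rfl | hA
    · simp only [oAux_nil]
    obtain ⟨c, hc⟩ := List.exists_mem_of_ne_nil A hA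
    obtain _ | g := g
    · have := hS c hc; have := hg c hc; omega
    have hblocks : ∀ b ∈ A.splitOn n, oAux f (n + 1) b = oAux g (n + 1) b := fun b hb => by
      refine ih (fun c hc => ?_) (fun c hc => ?_) (fun c hc => ?_) <;>
      · obtain ⟨hcA, hcn⟩ := List.mem_of_mem_splitOn hb hc
        have := hS c hcA; have := hf c hcA; have := hg c hcA; omega
    simp only [oAux, List.map_congr_left fun b hb => congrArg (ω ^ ·) (hblocks b hb)]

@[simp] lemma oW_nil (n : ℕ) : oW n [] = 0 := oAux_nil _ _

lemma oW_eq_oAux {f n : ℕ} {A : Word} (hS : ∀ c ∈ A, n ≤ c) (hf : ∀ c ∈ A, c < f + n) :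
    oW n A = oAux f n A :=
  oAux_congr_fuel hS (fun c hc => by
    have : c ≤ A.foldr max 0 := List.le_max_of_le hc le_rfl
    omega) hf

lemma oW_pos {n : ℕ} {A : Word} (hA : A ≠ []) : 0 < oW n A := by
  rw [oW, oAux]
  split_ifs
  · exact_mod_cast List.length_pos_iff.2 hA
  · obtain ⟨b, L, hbL⟩ := List.exists_cons_of_ne_nil (List.splitOn_ne_nil n A)
    rw [hbL, List.map_cons, List.foldr_cons]
    exact (opow_pos _ omega0_pos).trans_le le_self_add

lemma oW_eq_opowSum {n : ℕ} {A : Word} (hS : ∀ c ∈ A, n ≤ c) (hA : ∃ c ∈ A, c ≠ n) :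
    oW n A = opowSum ((A.splitOn n).map (oW (n + 1))) := by
  rw [oW, oAux, if_neg (by simpa using hA), opowSum, List.sum_eq_foldr, List.map_map]
  congr 1
  refine List.map_congr_left fun b hb => congrArg (ω ^ ·) (oW_eq_oAux ?_ ?_).symm <;>
  · intro c hc
    obtain ⟨hcA, hcn⟩ := List.mem_of_mem_splitOn hb hc
    have : c ≤ A.foldr max 0 := List.le_max_of_le hcA le_rfl
    have := hS c hcA
    omega

-- The summand `1` is absorbed by infinite values, and matches the `k + 1` empty blocks of `n ^ k`.
lemma one_add_oW {n : ℕ} {A : Word} (hS : ∀ c ∈ A, n ≤ c) :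
    1 + oW n A = opowSum ((A.splitOn n).map (oW (n + 1))) := by
  by_cases hA : ∃ c ∈ A, c ≠ n
  · obtain ⟨c, hcA, hcn⟩ := hA
    obtain ⟨b, hb, hcb⟩ := List.exists_mem_splitOn_of_mem hcA hcn
    rw [oW_eq_opowSum hS ⟨c, hcA, hcn⟩, one_add_of_omega0_le]
    calc ω = ω ^ (1 : Ordinal) := (opow_one ω).symm
      _ ≤ ω ^ oW (n + 1) b := opow_le_opow_right omega0_pos
        (Order.one_le_iff_pos.2 (oW_pos (List.ne_nil_of_mem hcb)))
      _ ≤ _ := opow_le_opowSum (List.mem_map_of_mem hb)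
  · push Not at hA
    rw [List.eq_replicate_iff.2 ⟨rfl, hA⟩, oW, oAux, if_pos (by simp), List.splitOn_replicate,
      List.map_replicate, oW_nil, opowSum, List.map_replicate, opow_zero, List.sum_replicate,
      nsmul_one, List.length_replicate]
    norm_cast
    omega

lemma one_add_oW_of_not_mem {n : ℕ} {A : Word} (hS : ∀ c ∈ A, n ≤ c) (hn : n ∉ A) :
    1 + oW n A = ω ^ oW (n + 1) A := by
  simp [one_add_oW hS, List.splitOn_eq_singleton hn]

def nfWords (n k : ℕ) : Set Word := {A | InNF A ∧ ∀ c ∈ A, c ∈ Set.Ico n (n + k)}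

lemma nil_mem_nfWords (n k : ℕ) : [] ∈ nfWords n k := ⟨nfAux_nil 0, by simp⟩

lemma eq_nil_of_forall_mem_Ico_self {n : ℕ} {A : Word} (hA : ∀ c ∈ A, c ∈ Set.Ico n (n + 0)) :
    A = [] :=
  List.eq_nil_iff_forall_not_mem.2 fun c hc => by simpa using hA c hc

lemma mem_Ico_of_mem_splitOn {n k : ℕ} {A b : Word}
    (hA : ∀ c ∈ A, c ∈ Set.Ico n (n + (k + 1))) (hb : b ∈ A.splitOn n) :
    ∀ c ∈ b, c ∈ Set.Ico (n + 1) (n + 1 + k) := fun c hc => by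
  obtain ⟨hcA, hcn⟩ := List.mem_of_mem_splitOn hb hc
  have := hA c hcA
  simp only [Set.mem_Ico] at this ⊢
  omega

lemma mem_nfWords_of_mem_splitOn {n k : ℕ} {A b : Word} (hA : A ∈ nfWords n (k + 1))
    (hb : b ∈ A.splitOn n) : b ∈ nfWords (n + 1) k :=
  ⟨((inNF_iff_splitOn fun c hc => (hA.2 c hc).1).1 hA.1).2 b hb, mem_Ico_of_mem_splitOn hA.2 hb⟩

lemma mem_nfWords_succ_of_not_mem {n k : ℕ} {A : Word} (hA : A ∈ nfWords n (k + 1))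
    (hn : n ∉ A) : A ∈ nfWords (n + 1) k :=
  mem_nfWords_of_mem_splitOn hA (by simp [List.splitOn_eq_singleton hn])

lemma isChain_splitOn_of_mem_nfWords {n k : ℕ} {A : Word} (hA : A ∈ nfWords n (k + 1)) :
    (A.splitOn n).IsChain (fun x y => Wle y x) :=
  ((inNF_iff_splitOn fun c hc => (hA.2 c hc).1).1 hA.1).1

theorem wle_iff_oW_le {k n : ℕ} {A B : Word} (hA : A ∈ nfWords n k) (hB : B ∈ nfWords n k) :
    Wle A B ↔ oW n A ≤ oW n B := by
  induction k generalizing n A B with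
  | zero =>
    rw [eq_nil_of_forall_mem_Ico_self hA.2, eq_nil_of_forall_mem_Ico_self hB.2]
    exact iff_of_true (Or.inl ⟨rfl, rfl⟩) le_rfl
  | succ k ih =>
    have hS {C : Word} (hC : C ∈ nfWords n (k + 1)) : ∀ c ∈ C, n ≤ c := fun c hc => (hC.2 c hc).1
    have hsorted {C : Word} (hC : C ∈ nfWords n (k + 1)) :
        ((C.splitOn n).map (oW (n + 1))).Pairwise (· ≥ ·) :=
      (isChain_splitOn_of_mem_nfWords hC).pairwise_map_ge fun x hx y hy =>
        (ih (mem_nfWords_of_mem_splitOn hC hx) (mem_nfWords_of_mem_splitOn hC hy)).1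
    by_cases hn : n ∈ A ++ B
    · have hm : (A ++ B).min? = some n := List.min?_eq_some_iff.2
        ⟨hn, fun c hc => (List.mem_append.1 hc).elim (hS hA c) (hS hB c)⟩
      rw [wle_iff_lexMaxLe hm, lexMaxLe_congr (fun x hx y hy => ih hx hy) (nil_mem_nfWords _ _)
        (fun _ => mem_nfWords_of_mem_splitOn hA) (fun _ => mem_nfWords_of_mem_splitOn hB),
        lexMaxLe_comap_iff _ (hsorted hA) (hsorted hB),
        ← one_add_oW (hS hA), ← one_add_oW (hS hB), add_le_add_iff_left]
    · rw [List.mem_append, not_or] at hn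
      rw [ih (mem_nfWords_succ_of_not_mem hA hn.1) (mem_nfWords_succ_of_not_mem hB hn.2),
        ← opow_le_opow_iff_right one_lt_omega0, ← one_add_oW_of_not_mem (hS hA) hn.1,
        ← one_add_oW_of_not_mem (hS hB) hn.2, add_le_add_iff_left]

lemma omegaTower_pos (k : ℕ) : 0 < omegaTower k := by
  cases k <;> simp [omegaTower, opow_pos]

theorem oW_lt_omegaTower {k n : ℕ} {A : Word} (hA : ∀ c ∈ A, c ∈ Set.Ico n (n + k)) :
    oW n A < omegaTower k := by
  induction k generalizing n A with
  | zero => simp [eq_nil_of_forall_mem_Ico_self hA, omegaTower]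
  | succ k ih =>
    calc oW n A ≤ 1 + oW n A := le_add_self
      _ = opowSum ((A.splitOn n).map (oW (n + 1))) := one_add_oW fun c hc => (hA c hc).1
      _ < ω ^ omegaTower k := opowSum_lt_opow fun e he => by
          obtain ⟨b, hb, rfl⟩ := List.mem_map.1 he
          exact ih (mem_Ico_of_mem_splitOn hA hb)

lemma pairwise_map_oW_splitOn {n k : ℕ} {A : Word} (hA : A ∈ nfWords n (k + 1)) :
    ((A.splitOn n).map (oW (n + 1))).Pairwise (· ≥ ·) :=
  (isChain_splitOn_of_mem_nfWords hA).pairwise_map_ge fun _ hx _ hy =>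
    (wle_iff_oW_le (mem_nfWords_of_mem_splitOn hA hx) (mem_nfWords_of_mem_splitOn hA hy)).1

theorem oW_injOn (n k : ℕ) : Set.InjOn (oW n) (nfWords n k) := by
  induction k generalizing n with
  | zero =>
    intro A hA B hB _
    rw [eq_nil_of_forall_mem_Ico_self hA.2, eq_nil_of_forall_mem_Ico_self hB.2]
  | succ k ih =>
    intro A hA B hB h
    have himg := eq_of_opowSum_eq (pairwise_map_oW_splitOn hA) (pairwise_map_oW_splitOn hB)
      (by rw [← one_add_oW fun c hc => (hA.2 c hc).1, ← one_add_oW fun c hc => (hB.2 c hc).1,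
        h])
    have hblocks := (ih (n + 1)).eq_of_list_map_eq (fun _ => mem_nfWords_of_mem_splitOn hA)
      (fun _ => mem_nfWords_of_mem_splitOn hB) himg
    rw [← List.intercalate_splitOn (xs := A) n, hblocks, List.intercalate_splitOn]

lemma splitOn_intercalate_of_mem_nfWords {n k : ℕ} {bs : List Word}
    (hbs : ∀ b ∈ bs, b ∈ nfWords (n + 1) k) (hne : bs ≠ []) :
    ([n].intercalate bs).splitOn n = bs :=
  List.splitOn_intercalate n (fun b hb hn => by simpa using ((hbs b hb).2 n hn).1) hne

lemma intercalate_mem_nfWords {n k : ℕ} {bs : List Word} (hbs : ∀ b ∈ bs, b ∈ nfWords (n + 1) k)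
    (hne : bs ≠ []) (hsorted : (bs.map (oW (n + 1))).Pairwise (· ≥ ·)) :
    [n].intercalate bs ∈ nfWords n (k + 1) := by
  have hsplit := splitOn_intercalate_of_mem_nfWords hbs hne
  have hsym : ∀ c ∈ [n].intercalate bs, c ∈ Set.Ico n (n + (k + 1)) := fun c hc => by
    by_cases hcn : c = n
    · simp [hcn]
    · obtain ⟨b, hb, hcb⟩ := List.exists_mem_splitOn_of_mem hc hcn
      rw [hsplit] at hb
      have := (hbs b hb).2 c hcb
      simp only [Set.mem_Ico] at this ⊢
      omega
  refine ⟨(inNF_iff_splitOn fun c hc => (hsym c hc).1).2 ?_, hsym⟩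
  rw [hsplit]
  refine ⟨?_, fun b hb => (hbs b hb).1⟩
  exact ((List.isChain_map _).1 hsorted.isChain).imp_of_mem_imp fun x y hx hy h =>
    (wle_iff_oW_le (hbs y hy) (hbs x hx)).2 h

theorem exists_mem_nfWords_oW_eq (n : ℕ) {k : ℕ} {β : Ordinal} (hβ : β < omegaTower k) :
    ∃ A ∈ nfWords n k, oW n A = β := by
  induction k generalizing n β with
  | zero => exact ⟨[], nil_mem_nfWords n 0, by simpa [omegaTower, eq_comm] using hβ⟩
  | succ k ih =>
    choose! word hword using fun β (hβ : β < omegaTower k) => ih (n + 1) hβ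
    have h1β : 1 + β < ω ^ omegaTower k := isPrincipal_add_omega0_opow _
      (one_lt_opow.2 ⟨one_lt_omega0, (omegaTower_pos k).ne'⟩) hβ
    obtain ⟨u, hu, hlt, hsum⟩ := exists_opowSum_eq h1β
    have hmap : (u.map word).map (oW (n + 1)) = u := by
      rw [List.map_map]
      exact (List.map_congr_left fun e he => (hword e (hlt e he)).2).trans u.map_id
    have hbs : ∀ b ∈ u.map word, b ∈ nfWords (n + 1) k := fun b hb => by
      obtain ⟨e, he, rfl⟩ := List.mem_map.1 hb
      exact (hword e (hlt e he)).1
    have hne : u.map word ≠ [] := fun h => by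
      rw [List.map_eq_nil_iff.1 h, opowSum_nil] at hsum
      exact (zero_lt_one.trans_le le_self_add).ne hsum
    have hA := intercalate_mem_nfWords hbs hne (by rwa [hmap])
    refine ⟨_, hA, (add_right_inj (1 : Ordinal)).1 ?_⟩
    rw [one_add_oW fun c hc => (hA.2 c hc).1, splitOn_intercalate_of_mem_nfWords hbs hne, hmap,
      hsum]

theorem oW_orderIso (k n : ℕ) :
    (∀ A ∈ SnWkN n k, oW n A < omegaTower (k+1)) ∧
    (∀ β < omegaTower (k+1), ∃ A ∈ SnWkN n k, oW n A = β) ∧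
    (∀ A ∈ SnWkN n k, ∀ B ∈ SnWkN n k, oW n A = oW n B → A = B) ∧
    (∀ A ∈ SnWkN n k, ∀ B ∈ SnWkN n k, (Wlt A B ↔ oW n A < oW n B)) := by
  have hSnWkN : SnWkN n k = nfWords n (k + 1) := by
    ext A
    simp only [SnWkN, nfWords, Set.mem_ofPred_eq, Set.mem_Ico, ← add_assoc, Nat.lt_add_one_iff,
      forall_and]
    tauto
  rw [hSnWkN]
  refine ⟨fun A hA => oW_lt_omegaTower hA.2, fun β hβ => exists_mem_nfWords_oW_eq n hβ,
    fun A hA B hB h => oW_injOn n (k + 1) hA hB h, fun A hA B hB => ?_⟩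
  rw [Wlt, wle_iff_oW_le hA hB, wle_iff_oW_le hB hA, lt_iff_le_not_ge]
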